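/- arXiv:2204.05123 — 6 statements merged into one kernel-verified Lean document; each statement's English description precedes it below -/
import Mathlib

section
/- There is no binary operation f : Fin 3 → Fin 3 → Fin 3 satisfying f (f (f b c) a) (f b (f (f b a) b)) = a for all a, b, c : Fin 3; that is, the single Sheffer-stroke axiom for Boolean algebra has no models of size 3. -/
/-!
A model on `Fin 3` would be one of `3 ^ 9` operation tables. Rather than testing them all, fill
the table one cell at a time and abandon a partial table as soon as some instance of the axiom
whose evaluation only reads filled cells fails. Every branch of this search dies (it has about
800 nodes), and the search is sound because a model agrees with every partial table it extends.
-/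

variable {α : Type*}

def WolframAxiom (f : α → α → α) : Prop :=
  ∀ a b c, f (f (f b c) a) (f b (f (f b a) b)) = a

namespace WolframAxiom

def partialLhs (p : α → α → Option α) (a b c : α) : Option α := do
  let l ← p (← p b c) a
  let r ← p b (← p (← p b a) b)
  p l r

def Consistent (p : α → α → Option α) : Prop :=
  ∀ a b c, ∀ v ∈ partialLhs p a b c, v = a

instance [Fintype α] [DecidableEq α] (p : α → α → Option α) : Decidable (Consistent p) := by
  unfold Consistent; infer_instance

def Extends (f : α → α → α) (p : α → α → Option α) : Prop :=
  ∀ x y, ∀ v ∈ p x y, f x y = v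

def assign [DecidableEq α] (p : α → α → Option α) (x y v : α) : α → α → Option α :=
  fun x' y' => if x' = x ∧ y' = y then some v else p x' y'

/-- `refutes p cells` : every way of filling `cells` into `p`, in this order, becomes
inconsistent at some stage. -/
def refutes [Fintype α] [DecidableEq α] (p : α → α → Option α) : List (α × α) → Bool
  | [] => !decide (Consistent p)
  | (x, y) :: cells => !decide (Consistent p) || decide (∀ v, refutes (assign p x y v) cells)

section

variable {f : α → α → α} {p : α → α → Option α}

theorem Extends.partialLhs_eq_some (h : Extends f p) {a b c v : α}
    (hv : partialLhs p a b c = some v) : f (f (f b c) a) (f b (f (f b a) b)) = v := by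
  simp only [partialLhs, Option.bind_eq_bind, Option.bind_eq_some_iff] at hv
  obtain ⟨bc, hbc, l, hl, ba, hba, bab, hbab, r, hr, hv⟩ := hv
  rw [h _ _ _ hbc, h _ _ _ hl, h _ _ _ hba, h _ _ _ hbab, h _ _ _ hr, h _ _ _ hv]

theorem Extends.consistent (h : Extends f p) (hf : WolframAxiom f) : Consistent p :=
  fun a b c _ hv => (h.partialLhs_eq_some hv).symm.trans (hf a b c)

theorem Extends.assign [DecidableEq α] (h : Extends f p) (x y : α) :
    Extends f (assign p x y (f x y)) := by
  intro x' y' v hv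
  unfold WolframAxiom.assign at hv
  split_ifs at hv with hxy
  · obtain ⟨rfl, rfl⟩ := hxy
    exact Option.some_injective _ hv
  · exact h x' y' v hv

theorem Extends.refutes_eq_false [Fintype α] [DecidableEq α] (h : Extends f p)
    (hf : WolframAxiom f) (cells : List (α × α)) : refutes p cells = false := by
  induction cells generalizing p with
  | nil => simp [refutes, h.consistent hf]
  | cons cell cells ih =>
    obtain ⟨x, y⟩ := cell
    simp only [refutes, h.consistent hf, decide_true, Bool.not_true, Bool.false_or,
      decide_eq_false_iff_not, not_forall]
    exact ⟨f x y, by simp [ih (h.assign x y)]⟩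

end

theorem not_of_refutes [Fintype α] [DecidableEq α] {cells : List (α × α)}
    (h : refutes (fun _ _ => none) cells = true) (f : α → α → α) : ¬ WolframAxiom f := by
  intro hf
  have hempty : Extends f fun _ _ => none := fun _ _ _ hv => nomatch hv
  simp [hempty.refutes_eq_false hf] at h

end WolframAxiom

theorem stmt_5 :
    ¬ ∃ f : Fin 3 → Fin 3 → Fin 3,
      ∀ a b c : Fin 3, f (f (f b c) a) (f b (f (f b a) b)) = a := by
  rintro ⟨f, hf⟩
  have hsearch : WolframAxiom.refutes (fun _ _ : Fin 3 => none)
      (List.finRange 3 ×ˢ List.finRange 3) = true := by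
    decide +kernel
  exact WolframAxiom.not_of_refutes hsearch f hf
end

section
/- If M is a type with a binary operation ∘ satisfying x ∘ y = (y ∘ x) ∘ y for all x, y in M, then (a ∘ ((b ∘ a) ∘ (a ∘ b))) ∘ a = b ∘ a for all a, b in M. -/
section

variable {M : Type*} {f : M → M → M}

theorem absorb_left (h : ∀ x y : M, f x y = f (f y x) y) (x y : M) : f (f y x) y = f x y :=
  (h x y).symm

theorem absorb_left_swap (h : ∀ x y : M, f x y = f (f y x) y) (x y : M) :
    f (f y x) (f x y) = f x (f x y) := by
  rw [h y x, absorb_left h]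

end

theorem stmt_7 {M : Type*} (f : M → M → M)
    (h : ∀ x y : M, f x y = f (f y x) y) :
    ∀ a b : M, f (f a (f (f b a) (f a b))) a = f b a := by
  intro a b
  calc f (f a (f (f b a) (f a b))) a
      = f (f (f b a) (f a b)) a := absorb_left h _ _
    _ = f (f a (f a b)) a := by rw [absorb_left_swap h]
    _ = f (f a b) a := absorb_left h _ _
    _ = f b a := absorb_left h _ _
end

section
/- If M is a type with a binary operation ∘ satisfying (b ∘ a) ∘ ((c ∘ a) ∘ c) = a for all a, b, c in M, then a ∘ (a ∘ (b ∘ b)) = b ∘ b for all a, b in M. -/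
/-!
The law forces `f` to be the right projection, `f x a = a`, after which the identity is immediate.
Specialising `c` so that the right factor collapses gives `f (f b a) a = a`; comparing two
instances of the law then gives `f (f c a) c = a`, and the first identity with `b := f a x`
turns into `f x a = a`.
-/

namespace RightProjectionLaw

variable {M : Type*} {f : M → M → M}

theorem op_op_self_right (h : ∀ a b c : M, f (f b a) (f (f c a) c) = a) (a b : M) :
    f (f b a) a = a := by
  simpa only [h a (f (f a a) a) a] using h a b (f (f a a) a)

theorem op_op_swap (h : ∀ a b c : M, f (f b a) (f (f c a) c) = a) (a c : M) :
    f (f c a) c = a := by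
  have hleft : f a (f (f c a) c) = a := by
    simpa only [op_op_self_right h a a] using h a (f a a) c
  have hright : f a (f (f c a) c) = f (f c a) c := by
    simpa only [h a a c] using op_op_self_right h (f (f c a) c) (f a a)
  exact hright.symm.trans hleft

theorem op_eq_right (h : ∀ a b c : M, f (f b a) (f (f c a) c) = a) (x a : M) :
    f x a = a := by
  simpa only [op_op_swap h x a] using op_op_self_right h a (f a x)

end RightProjectionLaw

theorem stmt_13 {M : Type*} (f : M → M → M)
    (h : ∀ a b c : M, f (f b a) (f (f c a) c) = a) :
    ∀ a b : M, f a (f a (f b b)) = f b b := by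
  intro a b
  rw [RightProjectionLaw.op_eq_right h, RightProjectionLaw.op_eq_right h]
end

section
/- If B is a type with binary operations ⊓, ⊔ and a unary operation ᶜ satisfying the six Huntington-style axioms, then the law of double negation holds: (aᶜ)ᶜ = a for all a in B. -/
section Complements

variable {B : Type*} {inf sup : B → B → B}

theorem inf_compl_eq_inf_compl {compl : B → B} (hsupc : ∀ a b : B, sup a b = sup b a)
    (hsupid : ∀ a b : B, sup a (inf b (compl b)) = a) (b c : B) :
    inf b (compl b) = inf c (compl c) := by
  calc inf b (compl b) = sup (inf b (compl b)) (inf c (compl c)) := (hsupid _ c).symm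
    _ = sup (inf c (compl c)) (inf b (compl b)) := hsupc _ _
    _ = inf c (compl c) := hsupid _ b

theorem sup_compl_eq_sup_compl {compl : B → B} (hinfc : ∀ a b : B, inf a b = inf b a)
    (hinfid : ∀ a b : B, inf a (sup b (compl b)) = a) (b c : B) :
    sup b (compl b) = sup c (compl c) := by
  calc sup b (compl b) = inf (sup b (compl b)) (sup c (compl c)) := (hinfid _ c).symm
    _ = inf (sup c (compl c)) (sup b (compl b)) := hinfc _ _
    _ = sup c (compl c) := hinfid _ b

variable {bot top : B} (hsupc : ∀ a b : B, sup a b = sup b a)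
  (hinfc : ∀ a b : B, inf a b = inf b a) (hsup_bot : ∀ a, sup a bot = a)
  (hinf_top : ∀ a, inf a top = a)
  (hinfd : ∀ a b c : B, inf a (sup b c) = sup (inf a b) (inf a c))
include hsupc hinfc hsup_bot hinf_top hinfd

theorem eq_inf_of_inf_eq_bot_of_sup_eq_top {x y z : B} (hxy : inf x y = bot)
    (hxz : sup x z = top) : y = inf y z := by
  calc y = inf y (sup x z) := by rw [hxz, hinf_top]
    _ = sup (inf y x) (inf y z) := hinfd y x z
    _ = inf y z := by rw [hinfc y x, hxy, hsupc, hsup_bot]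

theorem eq_of_isComplement {x y z : B} (hxy : inf x y = bot) (hxy' : sup x y = top)
    (hxz : inf x z = bot) (hxz' : sup x z = top) : y = z :=
  calc y = inf y z :=
        eq_inf_of_inf_eq_bot_of_sup_eq_top hsupc hinfc hsup_bot hinf_top hinfd hxy hxz'
    _ = inf z y := hinfc y z
    _ = z :=
        (eq_inf_of_inf_eq_bot_of_sup_eq_top hsupc hinfc hsup_bot hinf_top hinfd hxz hxy').symm

end Complements

theorem stmt_16_general {B : Type*} (inf sup : B → B → B) (compl : B → B)
    (hsupc : ∀ a b : B, sup a b = sup b a)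
    (hinfc : ∀ a b : B, inf a b = inf b a)
    (hsupid : ∀ a b : B, sup a (inf b (compl b)) = a)
    (hinfid : ∀ a b : B, inf a (sup b (compl b)) = a)
    (hinfd : ∀ a b c : B, inf a (sup b c) = sup (inf a b) (inf a c)) :
    ∀ a : B, compl (compl a) = a := by
  intro a
  -- Both `a` and `compl (compl a)` are complements of `compl a`.
  refine (eq_of_isComplement hsupc hinfc (hsupid · a) (hinfid · a) hinfd
    (x := compl a) ?_ ?_ ?_ ?_).symm
  · exact hinfc _ _
  · exact hsupc _ _
  · exact inf_compl_eq_inf_compl hsupc hsupid _ _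
  · exact sup_compl_eq_sup_compl hinfc hinfid _ _

theorem stmt_16 {B : Type*} (inf sup : B → B → B) (compl : B → B)
    (hsupc : ∀ a b : B, sup a b = sup b a)
    (hinfc : ∀ a b : B, inf a b = inf b a)
    (hsupid : ∀ a b : B, sup a (inf b (compl b)) = a)
    (hinfid : ∀ a b : B, inf a (sup b (compl b)) = a)
    (hinfd : ∀ a b c : B, inf a (sup b c) = sup (inf a b) (inf a c))
    (hsupd : ∀ a b c : B, sup a (inf b c) = inf (sup a b) (sup a c)) :
    ∀ a : B, compl (compl a) = a :=
  stmt_16_general inf sup compl hsupc hinfc hsupid hinfid hinfd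
end

section
/- If B is a type with binary operations ⊓, ⊔ and a unary operation ᶜ satisfying the six Huntington-style axioms, then the laws of noncontradiction and of the excluded middle hold: aᶜ ⊓ a = bᶜ ⊓ b and aᶜ ⊔ a = bᶜ ⊔ b for all a, b in B. -/
/-! Every `b ⊓ bᶜ` is an identity for `⊔`, and every `b ⊔ bᶜ` an identity for `⊓`; a commutative
operation has at most one identity. -/

theorem right_identity_unique_of_comm {α : Type*} (op : α → α → α)
    (hcomm : ∀ a b, op a b = op b a) {e f : α} (he : ∀ a, op a e = a) (hf : ∀ a, op a f = a) :
    e = f :=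
  calc e = op e f := (hf e).symm
    _ = op f e := hcomm e f
    _ = f := he f

theorem stmt_17_general {B : Type*} (inf sup : B → B → B) (compl : B → B)
    (hsupc : ∀ a b : B, sup a b = sup b a)
    (hinfc : ∀ a b : B, inf a b = inf b a)
    (hsupid : ∀ a b : B, sup a (inf b (compl b)) = a)
    (hinfid : ∀ a b : B, inf a (sup b (compl b)) = a) :
    ∀ a b : B, inf (compl a) a = inf (compl b) b ∧ sup (compl a) a = sup (compl b) b := by
  intro a b
  rw [hinfc (compl a), hinfc (compl b), hsupc (compl a), hsupc (compl b)]
  exact ⟨right_identity_unique_of_comm sup hsupc (fun x => hsupid x a) (fun x => hsupid x b),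
    right_identity_unique_of_comm inf hinfc (fun x => hinfid x a) (fun x => hinfid x b)⟩

theorem stmt_17 {B : Type*} (inf sup : B → B → B) (compl : B → B)
    (hsupc : ∀ a b : B, sup a b = sup b a)
    (hinfc : ∀ a b : B, inf a b = inf b a)
    (hsupid : ∀ a b : B, sup a (inf b (compl b)) = a)
    (hinfid : ∀ a b : B, inf a (sup b (compl b)) = a)
    (hinfd : ∀ a b c : B, inf a (sup b c) = sup (inf a b) (inf a c))
    (hsupd : ∀ a b c : B, sup a (inf b c) = inf (sup a b) (sup a c)) :
    ∀ a b : B, inf (compl a) a = inf (compl b) b ∧ sup (compl a) a = sup (compl b) b :=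
  stmt_17_general inf sup compl hsupc hinfc hsupid hinfid
end

section
/- If B is a type with binary operations ⊓, ⊔ and a unary operation ᶜ satisfying the six Huntington-style axioms, then both operations are associative: (a ⊓ b) ⊓ c = a ⊓ (b ⊓ c) and (a ⊔ b) ⊔ c = a ⊔ (b ⊔ c) for all a, b, c in B. -/
/-! The axioms are invariant under swapping `⊓` and `⊔`, so it suffices to prove that `⊓` is
associative. After deriving the absorption laws, an element `x` is determined by `a ⊔ x` and
`aᶜ ⊔ x`, since `x = (a ⊔ x) ⊓ (aᶜ ⊔ x)`. Taking joins with `a` gives `a` for both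
`(a ⊓ b) ⊓ c` and `a ⊓ (b ⊓ c)`, and taking joins with `aᶜ` gives `(aᶜ ⊔ b) ⊓ (aᶜ ⊔ c)`
for both. -/

structure IsHuntingtonAlgebra {B : Type*} (inf sup : B → B → B) (compl : B → B) : Prop where
  sup_comm : ∀ a b, sup a b = sup b a
  inf_comm : ∀ a b, inf a b = inf b a
  sup_inf_self_compl : ∀ a b, sup a (inf b (compl b)) = a
  inf_sup_self_compl : ∀ a b, inf a (sup b (compl b)) = a
  inf_sup_distrib : ∀ a b c, inf a (sup b c) = sup (inf a b) (inf a c)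
  sup_inf_distrib : ∀ a b c, sup a (inf b c) = inf (sup a b) (sup a c)

namespace IsHuntingtonAlgebra

variable {B : Type*} {inf sup : B → B → B} {compl : B → B}

theorem dual (h : IsHuntingtonAlgebra inf sup compl) : IsHuntingtonAlgebra sup inf compl :=
  ⟨h.inf_comm, h.sup_comm, h.inf_sup_self_compl, h.sup_inf_self_compl, h.sup_inf_distrib,
    h.inf_sup_distrib⟩

theorem inf_self_compl_sup (h : IsHuntingtonAlgebra inf sup compl) (b x : B) :
    sup (inf b (compl b)) x = x := by
  rw [h.sup_comm, h.sup_inf_self_compl]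

theorem inf_inf_self_compl (h : IsHuntingtonAlgebra inf sup compl) (b : B) :
    inf b (inf b (compl b)) = inf b (compl b) :=
  calc inf b (inf b (compl b))
      = sup (inf b (inf b (compl b))) (inf b (compl b)) := (h.sup_inf_self_compl _ b).symm
    _ = inf b (sup (inf b (compl b)) (compl b)) := (h.inf_sup_distrib b _ _).symm
    _ = inf b (compl b) := by rw [h.inf_self_compl_sup]

theorem inf_sup_self (h : IsHuntingtonAlgebra inf sup compl) (a b : B) :
    inf a (sup a b) = a :=
  calc inf a (sup a b)
      = inf (sup a (inf b (compl b))) (sup a b) := by rw [h.sup_inf_self_compl]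
    _ = sup a (inf (inf b (compl b)) b) := (h.sup_inf_distrib a _ b).symm
    _ = sup a (inf b (inf b (compl b))) := by rw [h.inf_comm _ b]
    _ = a := by rw [h.inf_inf_self_compl, h.sup_inf_self_compl]

theorem sup_inf_self (h : IsHuntingtonAlgebra inf sup compl) (a b : B) :
    sup a (inf a b) = a :=
  h.dual.inf_sup_self a b

theorem eq_of_sup_eq_of_sup_compl_eq (h : IsHuntingtonAlgebra inf sup compl) {a x y : B}
    (hx : sup a x = sup a y) (hxc : sup (compl a) x = sup (compl a) y) : x = y := by
  have decomp : ∀ z, z = inf (sup a z) (sup (compl a) z) := fun z => by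
    rw [h.sup_comm a, h.sup_comm (compl a), ← h.sup_inf_distrib, h.sup_inf_self_compl]
  rw [decomp x, decomp y, hx, hxc]

theorem inf_assoc (h : IsHuntingtonAlgebra inf sup compl) (a b c : B) :
    inf (inf a b) c = inf a (inf b c) := by
  apply h.eq_of_sup_eq_of_sup_compl_eq (a := a)
  · rw [h.sup_inf_distrib, h.sup_inf_self, h.inf_sup_self, h.sup_inf_self]
  · have sup_compl_self_inf : ∀ x, inf (sup (compl a) a) x = x := fun x => by
      rw [h.sup_comm, h.inf_comm, h.inf_sup_self_compl]
    rw [h.sup_inf_distrib, h.sup_inf_distrib, sup_compl_self_inf, h.sup_inf_distrib,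
      h.sup_inf_distrib, sup_compl_self_inf]

end IsHuntingtonAlgebra

theorem stmt_19 {B : Type*} (inf sup : B → B → B) (compl : B → B)
    (hsupc : ∀ a b : B, sup a b = sup b a)
    (hinfc : ∀ a b : B, inf a b = inf b a)
    (hsupid : ∀ a b : B, sup a (inf b (compl b)) = a)
    (hinfid : ∀ a b : B, inf a (sup b (compl b)) = a)
    (hinfd : ∀ a b c : B, inf a (sup b c) = sup (inf a b) (inf a c))
    (hsupd : ∀ a b c : B, sup a (inf b c) = inf (sup a b) (sup a c)) :
    ∀ a b c : B, inf (inf a b) c = inf a (inf b c) ∧ sup (sup a b) c = sup a (sup b c) := by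
  have h : IsHuntingtonAlgebra inf sup compl := ⟨hsupc, hinfc, hsupid, hinfid, hinfd, hsupd⟩
  exact fun a b c => ⟨h.inf_assoc a b c, h.dual.inf_assoc a b c⟩
end
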